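/- arXiv:2511.13871 — 4 statements merged into one kernel-verified Lean document; each statement's English description precedes it below -/
import Mathlib

section
/- Let E be a complex inner product space, let ψ ∈ E, and let T : E → E be a linear map that is skew-symmetric (⟨T x, y⟩ = −⟨x, T y⟩ for all x, y ∈ E) and that admits a finite decomposition T = Σ_{i ∈ s} c_i • A_i, where s is a finite index set, the c_i are complex coefficients, and the A_i : E → E are linear maps. If the contracted equations ⟨ψ, A_i (T ψ)⟩ = 0 hold for every i ∈ s, then T ψ = 0. (This is the abstract content of the paper's Theorem: satisfaction of the time-dependent contracted Schrödinger equation, i.e., the vanishing of the contractions of (d/dt + iĤ)|ψ⟩ against the two-electron operators in terms of which d/dt + iĤ is expressed, implies satisfaction of the time-dependent Schrödinger equation (d/dt + iĤ)|ψ⟩ = 0.) -/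
open scoped InnerProductSpace

/-- TDCSE ⇒ TDSE (abstract form): if a skew-symmetric linear map `T` on a complex
inner product space decomposes as a finite combination `T = ∑ i ∈ s, c i • A i`
and all contractions `⟪ψ, A i (T ψ)⟫ = 0` vanish, then `T ψ = 0`. -/
theorem tdcse_implies_tdse {E : Type*} [NormedAddCommGroup E] [InnerProductSpace ℂ E]
    {ι : Type*} (s : Finset ι) (c : ι → ℂ) (A : ι → E →ₗ[ℂ] E)
    (T : E →ₗ[ℂ] E)
    (hskew : ∀ x y : E, ⟪T x, y⟫_ℂ = -⟪x, T y⟫_ℂ)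
    (hdecomp : T = ∑ i ∈ s, c i • A i)
    (ψ : E)
    (hcontr : ∀ i ∈ s, ⟪ψ, A i (T ψ)⟫_ℂ = 0) :
    T ψ = 0 := by
  have h : ⟪ψ, T (T ψ)⟫_ℂ = 0 := by
    conv_lhs => rw [hdecomp]
    rw [LinearMap.sum_apply, inner_sum]
    refine Finset.sum_eq_zero fun i hi => ?_
    rw [LinearMap.smul_apply, inner_smul_right, ← hdecomp, hcontr i hi, mul_zero]
  have h2 : ⟪T ψ, T ψ⟫_ℂ = 0 := by rw [hskew, h, neg_zero]
  exact inner_self_eq_zero.mp h2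
end

section
/- Let E be a complex inner product space, let ψ ∈ E, and let T : E → E be a linear map that is skew-symmetric (⟨T x, y⟩ = −⟨x, T y⟩ for all x, y ∈ E) and that admits a finite decomposition T = Σ_{i ∈ s} c_i • A_i, where s is a finite index set, the c_i are complex coefficients, and the A_i : E → E are linear maps. Then T ψ = 0 if and only if ⟨ψ, A_i (T ψ)⟩ = 0 for every i ∈ s. (This is the paper's Theorem 1: the time-dependent Schrödinger equation is satisfied if and only if the time-dependent contracted Schrödinger equation is satisfied.) -/
open scoped InnerProductSpace

/-- Theorem 1 of the paper (abstract form): the TDSE `T ψ = 0` holds if and only if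
the TDCSE holds, i.e. all contractions `⟪ψ, A i (T ψ)⟫ = 0` vanish, where `T` is
skew-symmetric and `T = ∑ i ∈ s, c i • A i`. -/
theorem tdse_iff_tdcse {E : Type*} [NormedAddCommGroup E] [InnerProductSpace ℂ E]
    {ι : Type*} (s : Finset ι) (c : ι → ℂ) (A : ι → E →ₗ[ℂ] E)
    (T : E →ₗ[ℂ] E)
    (hskew : ∀ x y : E, ⟪T x, y⟫_ℂ = -⟪x, T y⟫_ℂ)
    (hdecomp : T = ∑ i ∈ s, c i • A i)
    (ψ : E) :
    T ψ = 0 ↔ ∀ i ∈ s, ⟪ψ, A i (T ψ)⟫_ℂ = 0 := by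
  constructor
  · intro h i _
    simp [h]
  · intro h
    have key : ⟪ψ, T (T ψ)⟫_ℂ = 0 := by
      obtain ⟨φ, hφ⟩ : ∃ φ, T ψ = φ := ⟨_, rfl⟩
      rw [hφ] at h ⊢
      rw [hdecomp]
      simp only [LinearMap.sum_apply, LinearMap.smul_apply, inner_sum, inner_smul_right]
      exact Finset.sum_eq_zero fun i hi => by rw [h i hi, mul_zero]
    have : ⟪T ψ, T ψ⟫_ℂ = 0 := by rw [hskew, key, neg_zero]
    exact inner_self_eq_zero.mp this
end

section
/- Let H be a complex Hilbert space, let ψ ∈ H, and let T : H → H be a skew-adjoint continuous linear map (adjoint T† = −T) admitting a finite decomposition T = Σ_{i ∈ s} c_i • A_i, where s is a finite index set, the c_i are complex coefficients, and the A_i : H → H are continuous linear maps. If the anticommutator contractions ⟨ψ, A_i (T ψ) + T (A_i ψ)⟩ = 0 vanish for every i ∈ s, then T ψ = 0. (This is the anti-Hermitian-portion form of the paper's Theorem: satisfaction of the anticommutator form ⟨ψ(t)| {a†_p a†_q a_s a_r, (d/dt + iĤ)} |ψ(t)⟩ = 0 of the TDCSE implies satisfaction of the TDSE.) -/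
open scoped InnerProductSpace

/-- Anticommutator form of TDCSE ⇒ TDSE: if `T` is skew-adjoint with
`T = ∑ i ∈ s, c i • A i` and all anticommutator contractions
`⟪ψ, A i (T ψ) + T (A i ψ)⟫ = 0` vanish, then `T ψ = 0`. -/
theorem anticommutator_tdcse_implies_tdse {H : Type*} [NormedAddCommGroup H]
    [InnerProductSpace ℂ H] [CompleteSpace H]
    {ι : Type*} (s : Finset ι) (c : ι → ℂ) (A : ι → H →L[ℂ] H)
    (T : H →L[ℂ] H) (hT : ContinuousLinearMap.adjoint T = -T)
    (hdecomp : T = ∑ i ∈ s, c i • A i)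
    (ψ : H)
    (hcontr : ∀ i ∈ s, ⟪ψ, (A i) (T ψ) + T ((A i) ψ)⟫_ℂ = 0) :
    T ψ = 0 := by
  have hadj : ∀ x y : H, ⟪x, T y⟫_ℂ = -⟪T x, y⟫_ℂ := by
    intro x y
    rw [← ContinuousLinearMap.adjoint_inner_left, hT]
    simp
  have key : ∀ i ∈ s, ⟪ψ, (A i) (T ψ)⟫_ℂ = ⟪T ψ, (A i) ψ⟫_ℂ := by
    intro i hi
    have := hcontr i hi
    rw [inner_add_right, hadj ψ ((A i) ψ)] at this
    linear_combination this
  have h2 : ⟪T ψ, T ψ⟫_ℂ = -⟪T ψ, T ψ⟫_ℂ := by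
    calc ⟪T ψ, T ψ⟫_ℂ = ⟪T ψ, (∑ i ∈ s, c i • A i) ψ⟫_ℂ := by rw [← hdecomp]
    _ = ∑ i ∈ s, c i * ⟪T ψ, (A i) ψ⟫_ℂ := by
        simp [ContinuousLinearMap.sum_apply, inner_sum, inner_smul_right]
    _ = ∑ i ∈ s, c i * ⟪ψ, (A i) (T ψ)⟫_ℂ := by
        exact Finset.sum_congr rfl fun i hi => by rw [key i hi]
    _ = ⟪ψ, (∑ i ∈ s, c i • A i) (T ψ)⟫_ℂ := by
        simp [ContinuousLinearMap.sum_apply, inner_sum, inner_smul_right]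
    _ = ⟪ψ, T (T ψ)⟫_ℂ := by rw [← hdecomp]
    _ = -⟪T ψ, T ψ⟫_ℂ := hadj ψ (T ψ)
  have : ⟪T ψ, T ψ⟫_ℂ = 0 := by linear_combination h2 / 2
  exact inner_self_eq_zero.mp this
end

section
/- Let H be a complex Hilbert space, let Ĥ : H → H be a self-adjoint continuous linear map (the Hamiltonian), and let ψ : ℝ → H be a differentiable curve. Fix t ∈ ℝ and suppose there exist a finite index set s, complex coefficients c_i, and linear maps A_i : H → H such that the operator T := Σ_{i ∈ s} c_i • A_i is skew-symmetric (⟨T x, y⟩ = −⟨x, T y⟩ for all x, y) and satisfies T (ψ t) = (deriv ψ t) + Complex.I • Ĥ (ψ t). If the contractions ⟨ψ t, A_i (T (ψ t))⟩ = 0 vanish for every i ∈ s, then ψ satisfies the time-dependent Schrödinger equation at t: deriv ψ t = −Complex.I • Ĥ (ψ t). (This is the paper's TDCSE ⇒ TDSE direction stated for an actual time-dependent wavefunction: if the action of d/dt + iĤ on ψ(t) is realized by a finite anti-Hermitian combination of the test operators and all contractions of the TDCSE vanish, then ψ obeys the TDSE.) -/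
open scoped InnerProductSpace

/-- TDCSE ⇒ TDSE for an actual time-dependent wavefunction: if the action of
`d/dt + iĤ` on `ψ t` is realized by a skew-symmetric finite combination
`T = ∑ i ∈ s, c i • A i` of test operators and all contractions
`⟪ψ t, A i (T (ψ t))⟫ = 0` vanish, then `ψ` obeys the TDSE at `t`:
`deriv ψ t = -I • Ĥ (ψ t)`. -/
theorem tdcse_implies_tdse_wavefunction {H : Type*} [NormedAddCommGroup H]
    [InnerProductSpace ℂ H] [CompleteSpace H]
    (Hop : H →L[ℂ] H) (hHop : ContinuousLinearMap.adjoint Hop = Hop)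
    (ψ : ℝ → H) (hψ : Differentiable ℝ ψ) (t : ℝ)
    {ι : Type*} (s : Finset ι) (c : ι → ℂ) (A : ι → H →ₗ[ℂ] H)
    (T : H →ₗ[ℂ] H) (hdecomp : T = ∑ i ∈ s, c i • A i)
    (hskew : ∀ x y : H, ⟪T x, y⟫_ℂ = -⟪x, T y⟫_ℂ)
    (haction : T (ψ t) = deriv ψ t + Complex.I • Hop (ψ t))
    (hcontr : ∀ i ∈ s, ⟪ψ t, A i (T (ψ t))⟫_ℂ = 0) :
    deriv ψ t = -Complex.I • Hop (ψ t) := by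
  have hTv : ⟪ψ t, T (T (ψ t))⟫_ℂ = 0 := by
    nth_rewrite 1 [hdecomp]
    simp only [LinearMap.coe_sum, LinearMap.smul_apply, Finset.sum_apply,
      inner_sum, inner_smul_right]
    refine Finset.sum_eq_zero fun i hi => ?_
    rw [hcontr i hi, mul_zero]
  have hv : T (ψ t) = 0 := by
    have h0 : ⟪T (ψ t), T (ψ t)⟫_ℂ = 0 := by
      rw [hskew, hTv, neg_zero]
    exact inner_self_eq_zero.mp h0
  have := haction ▸ hv
  have : deriv ψ t = -(Complex.I • Hop (ψ t)) := by
    rwa [add_eq_zero_iff_eq_neg] at this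
  simpa [neg_smul] using this
end
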